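/- arXiv:2305.05772 — 7 statements merged into one kernel-verified Lean document; each statement's English description precedes it below -/
import Mathlib

section
/- For the discrete reset-to-mod integrate-and-fire map with threshold ϑ > 0 and zero leakage, the output sequence b satisfies ‖a - b‖_A < ϑ, where ‖·‖_A is the discrete Alexiewicz norm; i.e., integrate-and-fire acts as ϑ-quantization in the Alexiewicz norm. -/
/-- Rounding toward zero to the grid `ϑ·ℤ`: `ϑ · sgn(v) · ⌊|v|/ϑ⌋`. -/
noncomputable def qmod (ϑ v : ℝ) : ℝ :=
  Real.sign v * ((⌊|v| / ϑ⌋ : ℤ) : ℝ) * ϑ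

/-- Membrane potential `v_n` (before reset) of the discrete reset-to-mod
integrate-and-fire map: `u_0 = 0`, `v_n = u_{n-1} + a_n`, `u_n = v_n - qmod ϑ v_n`
(0-based indexing). -/
noncomputable def IFv (ϑ : ℝ) (a : ℕ → ℝ) : ℕ → ℝ
  | 0 => a 0
  | n + 1 => (IFv ϑ a n - qmod ϑ (IFv ϑ a n)) + a (n + 1)

/-- Output spike amplitudes `b_n` of the reset-to-mod integrate-and-fire map. -/
noncomputable def IFb (ϑ : ℝ) (a : ℕ → ℝ) (n : ℕ) : ℝ := qmod ϑ (IFv ϑ a n)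

lemma qmod_close (ϑ : ℝ) (hϑ : 0 < ϑ) (v : ℝ) : |v - qmod ϑ v| < ϑ := by
  rcases lt_trichotomy v 0 with hv | hv | hv
  · have hs : Real.sign v = -1 := Real.sign_of_neg hv
    have hav : |v| = -v := abs_of_neg hv
    have h1 : (⌊|v| / ϑ⌋ : ℝ) * ϑ ≤ |v| := (le_div_iff₀ hϑ).mp (Int.floor_le _)
    have h2 : |v| < ((⌊|v| / ϑ⌋ : ℝ) + 1) * ϑ := (div_lt_iff₀ hϑ).mp (Int.lt_floor_add_one _)
    rw [qmod, hs, abs_lt]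
    constructor <;> nlinarith [h1, h2]
  · simp [qmod, hv, hϑ, abs_of_pos hϑ]
  · have hs : Real.sign v = 1 := Real.sign_of_pos hv
    have hav : |v| = v := abs_of_pos hv
    have h1 : (⌊|v| / ϑ⌋ : ℝ) * ϑ ≤ |v| := (le_div_iff₀ hϑ).mp (Int.floor_le _)
    have h2 : |v| < ((⌊|v| / ϑ⌋ : ℝ) + 1) * ϑ := (div_lt_iff₀ hϑ).mp (Int.lt_floor_add_one _)
    rw [qmod, hs, abs_lt]
    constructor <;> nlinarith [h1, h2]

lemma IF_partial (ϑ : ℝ) (a : ℕ → ℝ) (n : ℕ) :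
    ∑ i ∈ Finset.range (n + 1), (a i - IFb ϑ a i)
      = IFv ϑ a n - qmod ϑ (IFv ϑ a n) := by
  induction n with
  | zero => simp [IFb, IFv]
  | succ n ih =>
    rw [Finset.sum_range_succ, ih]
    simp [IFb, IFv]
    ring

/-- reset-to-mod integrate-and-fire is a `ϑ`-quantization in the
Alexiewicz norm: every partial sum of `a - b` has absolute value `< ϑ`,
i.e. `‖a - b‖_A < ϑ`. -/
theorem IF_quantization (ϑ : ℝ) (hϑ : 0 < ϑ) (a : ℕ → ℝ) :
    ∀ n : ℕ, |∑ i ∈ Finset.range n, (a i - IFb ϑ a i)| < ϑ := by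
  intro n
  cases n with
  | zero => simpa using hϑ
  | succ n => rw [IF_partial]; exact qmod_close ϑ hϑ _
end

section
/- Every output amplitude of the discrete reset-to-mod integrate-and-fire map with threshold ϑ is an integer multiple of ϑ, and the map is idempotent: applying it twice gives the same result as applying it once. -/
lemma qmod_mul (ϑ v : ℝ) : ∃ k : ℤ, qmod ϑ v = (k : ℝ) * ϑ := by
  rcases lt_trichotomy v 0 with h | h | h
  · exact ⟨-⌊|v| / ϑ⌋, by rw [qmod, Real.sign_of_neg h]; push_cast; ring⟩
  · exact ⟨0, by simp [qmod, h]⟩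
  · exact ⟨⌊|v| / ϑ⌋, by simp [qmod, Real.sign_of_pos h]⟩

lemma qmod_int (ϑ : ℝ) (hϑ : 0 < ϑ) (k : ℤ) : qmod ϑ ((k : ℝ) * ϑ) = (k : ℝ) * ϑ := by
  rcases lt_trichotomy k 0 with h | h | h
  · have hv : (k : ℝ) * ϑ < 0 := mul_neg_of_neg_of_pos (by exact_mod_cast h) hϑ
    have habs : |(k : ℝ) * ϑ| = (-k : ℝ) * ϑ := by
      rw [abs_of_neg hv]; ring
    rw [qmod, Real.sign_of_neg hv, habs, mul_div_cancel_right₀ _ hϑ.ne']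
    rw [show ((-k : ℝ)) = ((-k : ℤ) : ℝ) by push_cast; ring, Int.floor_intCast]
    push_cast; ring
  · subst h; simp [qmod]
  · have hv : (0:ℝ) < (k : ℝ) * ϑ := mul_pos (by exact_mod_cast h) hϑ
    rw [qmod, Real.sign_of_pos hv, abs_of_pos hv, mul_div_cancel_right₀ _ hϑ.ne',
      Int.floor_intCast]
    ring

/-- every output amplitude of reset-to-mod integrate-and-fire is an
integer multiple of the threshold `ϑ`, and the map is idempotent. -/
theorem IF_multiples_and_idempotent (ϑ : ℝ) (hϑ : 0 < ϑ) (a : ℕ → ℝ) :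
    (∀ n : ℕ, ∃ k : ℤ, IFb ϑ a n = (k : ℝ) * ϑ) ∧
    IFb ϑ (IFb ϑ a) = IFb ϑ a := by
  refine ⟨fun n => qmod_mul ϑ (IFv ϑ a n), ?_⟩
  have hv : ∀ n, IFv ϑ (IFb ϑ a) n = IFb ϑ a n := by
    intro n
    induction n with
    | zero => rfl
    | succ n ih =>
      obtain ⟨k, hk⟩ := qmod_mul ϑ (IFv ϑ a n)
      have : qmod ϑ (IFb ϑ a n) = IFb ϑ a n := by
        rw [show IFb ϑ a n = qmod ϑ (IFv ϑ a n) from rfl, hk, qmod_int ϑ hϑ]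
      rw [IFv, ih, this]; ring
  funext n
  obtain ⟨k, hk⟩ := qmod_mul ϑ (IFv ϑ a n)
  rw [show IFb ϑ (IFb ϑ a) n = qmod ϑ (IFv ϑ (IFb ϑ a) n) from rfl, hv,
    show IFb ϑ a n = qmod ϑ (IFv ϑ a n) from rfl, hk, qmod_int ϑ hϑ]
end

section
/- Every nonzero integer-valued sequence ψ ∈ ℤ^N can be written as a sum ψ = ∑_{r=1}^{m} η_r of integer-valued sequences η_r ∈ ℤ^N with ‖η_r‖_A = 1 for each r, where m = ‖ψ‖_A. -/
/-- The Alexiewicz norm of an integer sequence: maximum absolute partial sum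
(a natural number). -/
def anormZ {N : ℕ} (c : Fin N → ℤ) : ℕ :=
  Finset.univ.sup fun n : Fin N => (∑ i ∈ Finset.Iic n, c i).natAbs

namespace SpikeAux

def psum {N : ℕ} (c : Fin N → ℤ) (k : ℕ) : ℤ :=
  ∑ j ∈ Finset.range k, if h : j < N then c ⟨j, h⟩ else 0

lemma sum_Iic_eq {N : ℕ} (c : Fin N → ℤ) (n : Fin N) :
    ∑ i ∈ Finset.Iic n, c i = psum c (n.val + 1) := by
  unfold psum
  refine Finset.sum_nbij' (fun i : Fin N => (i : ℕ))
    (fun j => (⟨min j n.val, lt_of_le_of_lt (min_le_right _ _) n.isLt⟩ : Fin N))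
    ?_ ?_ ?_ ?_ ?_
  · intro a ha
    simp only [Finset.mem_Iic, Fin.le_def] at ha
    simp only [Finset.mem_range, Nat.lt_succ_iff]
    exact ha
  · intro a ha
    simp only [Finset.mem_Iic, Fin.le_def]
    exact min_le_right _ _
  · intro a ha
    simp only [Finset.mem_Iic, Fin.le_def] at ha
    ext
    simp [Nat.min_eq_left ha]
  · intro a ha
    simp only [Finset.mem_range, Nat.lt_succ_iff] at ha
    simp [Nat.min_eq_left ha]
  · intro a ha
    rw [dif_pos a.isLt]

lemma anormZ_eq {N : ℕ} (c : Fin N → ℤ) :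
    anormZ c = Finset.univ.sup fun n : Fin N => (psum c (n.val + 1)).natAbs := by
  unfold anormZ
  simp only [sum_Iic_eq]

lemma natAbs_psum_le {N : ℕ} (c : Fin N → ℤ) (n : Fin N) :
    (psum c (n.val + 1)).natAbs ≤ anormZ c := by
  rw [anormZ_eq]
  exact Finset.le_sup (f := fun n : Fin N => (psum c (n.val + 1)).natAbs) (Finset.mem_univ n)

lemma psum_succ {N : ℕ} (c : Fin N → ℤ) (n : Fin N) :
    psum c (n.val + 1) = psum c n.val + c n := by
  unfold psum
  rw [Finset.sum_range_succ, dif_pos n.isLt]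

lemma psum_sub {N : ℕ} (a b : Fin N → ℤ) (k : ℕ) :
    psum (a - b) k = psum a k - psum b k := by
  unfold psum
  rw [← Finset.sum_sub_distrib]
  refine Finset.sum_congr rfl fun j _ => ?_
  split <;> simp

lemma eq_zero_of_anormZ {N : ℕ} (c : Fin N → ℤ) (h : anormZ c = 0) : c = 0 := by
  have hz : ∀ k ≤ N, psum c k = 0 := by
    intro k hk
    match k with
    | 0 => simp [psum]
    | p + 1 =>
      have hp : p < N := hk
      have h2 : (psum c (p + 1)).natAbs ≤ anormZ c := by
        simpa using natAbs_psum_le c ⟨p, hp⟩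
      rw [h] at h2
      omega
  funext n
  have h1 := hz (n.val + 1) n.isLt
  have h2 := hz n.val (le_of_lt n.isLt)
  have h3 := psum_succ c n
  simp only [Pi.zero_apply]
  omega

lemma decomp_aux {N : ℕ} : ∀ m : ℕ, 0 < m → ∀ ψ : Fin N → ℤ, anormZ ψ = m →
    ∃ η : Fin m → (Fin N → ℤ), (∀ r, anormZ (η r) = 1) ∧ ψ = ∑ r, η r := by
  intro m
  induction m with
  | zero => omega
  | succ k ih =>
    intro _ ψ hm
    rcases Nat.eq_zero_or_pos k with hk | hk
    · subst hk
      refine ⟨fun _ => ψ, fun r => hm, ?_⟩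
      simp
    · -- m = k+1 ≥ 2
      have hN0 : N ≠ 0 := by
        rintro rfl
        rw [anormZ] at hm
        simp at hm
      have : Nonempty (Fin N) := ⟨⟨0, Nat.pos_of_ne_zero hN0⟩⟩
      obtain ⟨n₀, -, hn₀⟩ := Finset.exists_mem_eq_sup Finset.univ Finset.univ_nonempty
        (fun n : Fin N => (psum ψ (n.val + 1)).natAbs)
      rw [anormZ_eq] at hm
      rw [hm] at hn₀
      -- hn₀ : k+1 = (psum ψ (n₀+1)).natAbs
      set S : ℕ → ℤ := psum ψ with hS
      set clamp : ℤ → ℤ := fun v => if (k:ℤ) < v then (k:ℤ) else if v < -(k:ℤ) then -(k:ℤ) else v with hclamp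
      set t : ℕ → ℤ := fun j => S j - clamp (S j) with ht
      set φ : Fin N → ℤ := fun n => t (n.val + 1) - t n.val with hφ
      have ht0 : t 0 = 0 := by
        have : S 0 = 0 := by simp [hS, psum]
        simp [ht, hclamp, this]
        omega
      have hpφ : ∀ n : Fin N, psum φ (n.val + 1) = t (n.val + 1) := by
        intro n
        unfold psum
        have : ∀ j ∈ Finset.range (n.val + 1),
            (if h : j < N then φ ⟨j, h⟩ else 0) = t (j + 1) - t j := by
          intro j hj
          have hjN : j < N := lt_of_lt_of_le (Finset.mem_range.mp hj) n.isLt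
          rw [dif_pos hjN]
        rw [Finset.sum_congr rfl this, Finset.sum_range_sub, ht0, sub_zero]
      have hbound : ∀ n : Fin N, (S (n.val + 1)).natAbs ≤ k + 1 := by
        intro n
        rw [← hm]
        exact Finset.le_sup (f := fun n : Fin N => (S (n.val + 1)).natAbs) (Finset.mem_univ n)
      -- properties of t and clamp
      have htle : ∀ n : Fin N, (t (n.val + 1)).natAbs ≤ 1 := by
        intro n
        have := hbound n
        simp only [ht, hclamp]
        split_ifs <;> omega
      have hcle : ∀ n : Fin N, (clamp (S (n.val + 1))).natAbs ≤ k := by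
        intro n
        have := hbound n
        simp only [hclamp]
        split_ifs <;> omega
      have hSmax : (S (n₀.val + 1)).natAbs = k + 1 := hn₀.symm
      have hteq : (t (n₀.val + 1)).natAbs = 1 := by
        simp only [ht, hclamp]
        split_ifs <;> omega
      have hceq : (clamp (S (n₀.val + 1))).natAbs = k := by
        simp only [hclamp]
        split_ifs <;> omega
      -- anormZ φ = 1
      have hanφ : anormZ φ = 1 := by
        rw [anormZ_eq]
        apply le_antisymm
        · apply Finset.sup_le
          intro n _
          rw [hpφ n]
          exact htle n
        · have := Finset.le_sup (f := fun n : Fin N => (psum φ (n.val + 1)).natAbs)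
            (Finset.mem_univ n₀)
          simpa [hpφ n₀, hteq] using this
      -- anormZ (ψ - φ) = k
      have hpsub : ∀ n : Fin N, psum (ψ - φ) (n.val + 1) = clamp (S (n.val + 1)) := by
        intro n
        rw [psum_sub, hpφ n, ← hS]
        simp [ht]
      have hanψ' : anormZ (ψ - φ) = k := by
        rw [anormZ_eq]
        apply le_antisymm
        · apply Finset.sup_le
          intro n _
          rw [hpsub n]
          exact hcle n
        · have := Finset.le_sup (f := fun n : Fin N => (psum (ψ - φ) (n.val + 1)).natAbs)
            (Finset.mem_univ n₀)
          simpa [hpsub n₀, hceq] using this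
      obtain ⟨η', hη'1, hη'2⟩ := ih hk (ψ - φ) hanψ'
      refine ⟨Fin.cons φ η', ?_, ?_⟩
      · intro r
        refine Fin.cases ?_ ?_ r
        · simpa using hanφ
        · intro i
          simpa using hη'1 i
      · rw [Fin.sum_cons, ← hη'2]
        abel

end SpikeAux

/-- every nonzero integer sequence `ψ` with `‖ψ‖_A = m` decomposes
as a sum of `m` integer sequences each of Alexiewicz norm exactly `1`. -/
theorem spike_train_decomposition (N : ℕ) (ψ : Fin N → ℤ) (hψ : ψ ≠ 0) :
    ∃ η : Fin (anormZ ψ) → (Fin N → ℤ),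
      (∀ r, anormZ (η r) = 1) ∧ ψ = ∑ r, η r := by
  have hpos : 0 < anormZ ψ := by
    rcases Nat.eq_zero_or_pos (anormZ ψ) with h | h
    · exact absurd (SpikeAux.eq_zero_of_anormZ ψ h) hψ
    · exact h
  exact SpikeAux.decomp_aux (anormZ ψ) hpos ψ rfl
end

section
/- If ψ ∈ ℤ^N with ‖ψ‖_A ≥ 2, then there exists η ∈ ℤ^N with ‖η‖_A = 1 and ‖ψ - η‖_A = ‖ψ‖_A - 1. -/
lemma fin_Iic_zero {N : ℕ} (h : 0 < N) :
    Finset.Iic (⟨0, h⟩ : Fin N) = {⟨0, h⟩} := by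
  ext i
  simp [Finset.mem_Iic, Fin.le_def, Fin.ext_iff]

lemma fin_Iic_succ {N : ℕ} (k : ℕ) (h : k + 1 < N) :
    Finset.Iic (⟨k + 1, h⟩ : Fin N) =
      insert ⟨k + 1, h⟩ (Finset.Iic ⟨k, by omega⟩) := by
  ext i
  simp [Finset.mem_Iic, Fin.le_def, Fin.ext_iff]
  omega

/-- inductive step of the spike train decomposition: if
`‖ψ‖_A ≥ 2` there is an integer sequence `η` of norm `1` with
`‖ψ - η‖_A = ‖ψ‖_A - 1`. -/
theorem spike_train_decomposition_step (N : ℕ) (ψ : Fin N → ℤ) (hψ : 2 ≤ anormZ ψ) :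
    ∃ η : Fin N → ℤ, anormZ η = 1 ∧ anormZ (ψ - η) = anormZ ψ - 1 := by
  set M : ℕ := anormZ ψ with hMdef
  set S : Fin N → ℤ := fun n => ∑ i ∈ Finset.Iic n, ψ i with hSdef
  have hbound : ∀ n, (S n).natAbs ≤ M := fun n =>
    Finset.le_sup (f := fun n : Fin N => (∑ i ∈ Finset.Iic n, ψ i).natAbs)
      (Finset.mem_univ n)
  have hN : 0 < N := by
    by_contra h
    have hN0 : N = 0 := by omega
    subst hN0
    have : M = 0 := by
      simp [hMdef, anormZ]
    omega
  have hne : (Finset.univ : Finset (Fin N)).Nonempty :=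
    ⟨⟨0, hN⟩, Finset.mem_univ _⟩
  obtain ⟨m, -, hm⟩ := Finset.exists_mem_eq_sup Finset.univ hne
      (fun n : Fin N => (∑ i ∈ Finset.Iic n, ψ i).natAbs)
  have hm' : (S m).natAbs = M := hm.symm
  set t : Fin N → ℤ := fun n =>
    if S n = (M : ℤ) then 1 else if S n = -(M : ℤ) then -1 else 0 with htdef
  set η : Fin N → ℤ := fun i =>
    t i - (if h : (i : ℕ) = 0 then 0 else t ⟨(i : ℕ) - 1, by omega⟩) with hηdef
  -- telescoping
  have tele : ∀ (k : ℕ) (h : k < N), ∑ i ∈ Finset.Iic (⟨k, h⟩ : Fin N), η i = t ⟨k, h⟩ := by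
    intro k
    induction k with
    | zero =>
      intro h
      rw [fin_Iic_zero h, Finset.sum_singleton]
      simp [hηdef]
    | succ k ih =>
      intro h
      have hk : k < N := by omega
      rw [fin_Iic_succ k h, Finset.sum_insert (by simp [Finset.mem_Iic, Fin.le_def])]
      rw [ih hk]
      simp [hηdef]
  have tele' : ∀ n : Fin N, ∑ i ∈ Finset.Iic n, η i = t n := by
    intro n
    have := tele n.1 n.2
    simpa using this
  -- bounds on t
  have ht_abs : ∀ n, (t n).natAbs ≤ 1 := by
    intro n
    simp only [htdef]
    split_ifs <;> simp
  have hSm : S m = (M : ℤ) ∨ S m = -(M : ℤ) := by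
    rcases Int.natAbs_eq (S m) with h | h
    · left; rw [h, hm']
    · right; rw [h, hm']
  have htm : (t m).natAbs = 1 := by
    simp only [htdef]
    rcases hSm with h | h
    · rw [if_pos h]; simp
    · rw [if_neg, if_pos h]
      · simp
      · rw [h]; intro hc; omega
  -- partial sums of ψ - η
  have hsub : ∀ n : Fin N, ∑ i ∈ Finset.Iic n, (ψ - η) i = S n - t n := by
    intro n
    simp only [Pi.sub_apply, Finset.sum_sub_distrib, tele' n, hSdef]
  have hMZ : (2 : ℤ) ≤ (M : ℤ) := by exact_mod_cast hψ
  have hst : ∀ n, (S n - t n).natAbs ≤ M - 1 := by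
    intro n
    have hb := hbound n
    simp only [htdef]
    split_ifs with h1 h2
    · rw [h1]; omega
    · rw [h2]; omega
    · have : (S n).natAbs ≤ M - 1 := by
        rcases Int.natAbs_eq (S n) with h | h
        · by_contra hc
          have : (S n).natAbs = M := by omega
          exact h1 (by rw [h, this])
        · by_contra hc
          have : (S n).natAbs = M := by omega
          exact h2 (by rw [h, this])
      omega
  have hstm : (S m - t m).natAbs = M - 1 := by
    simp only [htdef]
    rcases hSm with h | h
    · rw [if_pos h, h]; omega
    · rw [if_neg (by rw [h]; intro hc; omega), if_pos h, h]
      have : -(M : ℤ) - (-1) = -((M : ℤ) - 1) := by ring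
      rw [this, Int.natAbs_neg]
      omega
  refine ⟨η, ?_, ?_⟩
  · -- anormZ η = 1
    apply le_antisymm
    · apply Finset.sup_le
      intro n _
      rw [tele' n]
      exact ht_abs n
    · calc 1 = (t m).natAbs := htm.symm
        _ = (∑ i ∈ Finset.Iic m, η i).natAbs := by rw [tele' m]
        _ ≤ _ := Finset.le_sup (f := fun n : Fin N => (∑ i ∈ Finset.Iic n, η i).natAbs) (Finset.mem_univ m)
  · -- anormZ (ψ - η) = M - 1
    apply le_antisymm
    · apply Finset.sup_le
      intro n _
      rw [hsub n]
      exact hst n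
    · calc M - 1 = (S m - t m).natAbs := hstm.symm
        _ = (∑ i ∈ Finset.Iic m, (ψ - η) i).natAbs := by rw [hsub m]
        _ ≤ _ := Finset.le_sup (f := fun n : Fin N => (∑ i ∈ Finset.Iic n, (ψ - η) i).natAbs) (Finset.mem_univ m)
end

section
/- For the reset-to-mod integrate-and-fire map with zero leakage and threshold ϑ, adding a perturbation ν with ‖ν‖_A ≤ ϑ changes the output by at most ϑ in Alexiewicz norm: ‖IF_ϑ(a + ν) - IF_ϑ(a)‖_A ≤ ϑ for all a. -/
/-- The discrete Alexiewicz norm of the first `N` entries of a sequence. -/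
noncomputable def Anorm (N : ℕ) (c : ℕ → ℝ) : ℝ :=
  ⨆ n : Fin N, |∑ i ∈ Finset.range (n.val + 1), c i|

lemma qmod_zero (ϑ : ℝ) : qmod ϑ 0 = 0 := by simp [qmod]

lemma qmod_neg (ϑ v : ℝ) : qmod ϑ (-v) = -(qmod ϑ v) := by
  simp only [qmod, Real.sign_neg, abs_neg]; ring

lemma qmod_exists_int (ϑ v : ℝ) : ∃ z : ℤ, qmod ϑ v = (z : ℝ) * ϑ := by
  rcases lt_trichotomy v 0 with h | h | h
  · refine ⟨-⌊|v| / ϑ⌋, ?_⟩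
    rw [qmod, Real.sign_of_neg h]; push_cast; ring
  · exact ⟨0, by simp [h, qmod]⟩
  · exact ⟨⌊|v| / ϑ⌋, by simp [qmod, Real.sign_of_pos h]⟩

lemma qmod_nonneg (ϑ v : ℝ) (hϑ : 0 < ϑ) (hv : 0 ≤ v) : 0 ≤ qmod ϑ v := by
  rcases hv.lt_or_eq with h | h
  · rw [qmod, Real.sign_of_pos h]
    have h1 : (0:ℤ) ≤ ⌊|v| / ϑ⌋ := Int.floor_nonneg.2 (by positivity)
    have : (0:ℝ) ≤ (⌊|v| / ϑ⌋ : ℝ) := by exact_mod_cast h1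
    nlinarith
  · simp [← h, qmod]

lemma sub_qmod_nonneg (ϑ v : ℝ) (hϑ : 0 < ϑ) (hv : 0 ≤ v) : 0 ≤ v - qmod ϑ v := by
  rcases hv.lt_or_eq with h | h
  · rw [qmod, Real.sign_of_pos h, abs_of_pos h]
    have h1 : (⌊v / ϑ⌋ : ℝ) ≤ v / ϑ := Int.floor_le _
    have h2 : (⌊v / ϑ⌋ : ℝ) * ϑ ≤ v := (le_div_iff₀ hϑ).1 h1
    nlinarith
  · simp [← h, qmod]

lemma sub_qmod_lt (ϑ v : ℝ) (hϑ : 0 < ϑ) (hv : 0 ≤ v) : v - qmod ϑ v < ϑ := by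
  rcases hv.lt_or_eq with h | h
  · rw [qmod, Real.sign_of_pos h, abs_of_pos h]
    have h1 : v / ϑ < (⌊v / ϑ⌋ : ℝ) + 1 := Int.lt_floor_add_one _
    have h2 : v < ((⌊v / ϑ⌋ : ℝ) + 1) * ϑ := (div_lt_iff₀ hϑ).1 h1
    nlinarith
  · simp [← h, qmod, hϑ]

lemma qmod_nonpos (ϑ v : ℝ) (hϑ : 0 < ϑ) (hv : v ≤ 0) : qmod ϑ v ≤ 0 := by
  have := qmod_nonneg ϑ (-v) hϑ (by linarith)
  rw [qmod_neg] at this; linarith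

lemma sub_qmod_nonpos (ϑ v : ℝ) (hϑ : 0 < ϑ) (hv : v ≤ 0) : v - qmod ϑ v ≤ 0 := by
  have := sub_qmod_nonneg ϑ (-v) hϑ (by linarith)
  rw [qmod_neg] at this; linarith

lemma neg_lt_sub_qmod (ϑ v : ℝ) (hϑ : 0 < ϑ) (hv : v ≤ 0) : -ϑ < v - qmod ϑ v := by
  have := sub_qmod_lt ϑ (-v) hϑ (by linarith)
  rw [qmod_neg] at this; linarith

lemma abs_sub_qmod_lt (ϑ v : ℝ) (hϑ : 0 < ϑ) : |v - qmod ϑ v| < ϑ := by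
  rcases le_or_gt 0 v with h | h
  · rw [abs_of_nonneg (sub_qmod_nonneg ϑ v hϑ h)]; exact sub_qmod_lt ϑ v hϑ h
  · rw [abs_of_nonpos (sub_qmod_nonpos ϑ v hϑ h.le)]
    have := neg_lt_sub_qmod ϑ v hϑ h.le; linarith

lemma sum_IFb (ϑ : ℝ) (a : ℕ → ℝ) (n : ℕ) :
    ∑ i ∈ Finset.range (n + 1), IFb ϑ a i
      = ∑ i ∈ Finset.range (n + 1), a i - (IFv ϑ a n - qmod ϑ (IFv ϑ a n)) := by
  induction n with
  | zero => simp [IFb, IFv]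
  | succ n ih =>
      have hv : IFv ϑ a (n + 1)
          = (IFv ϑ a n - qmod ϑ (IFv ϑ a n)) + a (n + 1) := rfl
      have hb : IFb ϑ a (n + 1) = qmod ϑ (IFv ϑ a (n + 1)) := rfl
      rw [Finset.sum_range_succ (fun i => IFb ϑ a i) (n + 1), ih, hb, hv,
        Finset.sum_range_succ a (n + 1)]
      ring

lemma step (ϑ : ℝ) (hϑ : 0 < ϑ) (v v' t : ℝ) (k : ℤ) (hk : |k| ≤ 1) (ht : |t| ≤ ϑ)
    (hrel : (k : ℝ) * ϑ + (qmod ϑ v' - qmod ϑ v)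
      = t + (v - qmod ϑ v) - (v' - qmod ϑ v')) :
    ∃ k' : ℤ, |k'| ≤ 1 ∧ (k : ℝ) * ϑ + (qmod ϑ v' - qmod ϑ v) = (k' : ℝ) * ϑ := by
  obtain ⟨z, hz⟩ := qmod_exists_int ϑ v
  obtain ⟨z', hz'⟩ := qmod_exists_int ϑ v'
  have heq : (k : ℝ) * ϑ + (qmod ϑ v' - qmod ϑ v) = ((k + z' - z : ℤ) : ℝ) * ϑ := by
    rw [hz, hz']; push_cast; ring
  refine ⟨k + z' - z, ?_, heq⟩
  have hS : ((k + z' - z : ℤ) : ℝ) * ϑ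
      = t + (v - qmod ϑ v) - (v' - qmod ϑ v') := by rw [← heq]; exact hrel
  obtain ⟨ht1, ht2⟩ := abs_le.1 ht
  obtain ⟨hu1, hu2⟩ := abs_lt.1 (abs_sub_qmod_lt ϑ v hϑ)
  obtain ⟨hu1', hu2'⟩ := abs_lt.1 (abs_sub_qmod_lt ϑ v' hϑ)
  have hb : |((k + z' - z : ℤ) : ℝ) * ϑ| < 3 * ϑ := by
    rw [hS]; exact abs_lt.2 ⟨by linarith, by linarith⟩
  rw [abs_mul, abs_of_pos hϑ] at hb
  have hb2 : |((k + z' - z : ℤ) : ℝ)| < 3 := (mul_lt_mul_iff_of_pos_right hϑ).1 (by linarith)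
  have hb3 : |k + z' - z| < 3 := by
    rw [← Int.cast_abs] at hb2; exact_mod_cast hb2
  have hkR : (k : ℝ) ≤ 1 := by exact_mod_cast (abs_le.1 hk).2
  have hkR' : (-1 : ℝ) ≤ (k : ℝ) := by exact_mod_cast (abs_le.1 hk).1
  obtain ⟨hka, hkb⟩ := abs_le.1 hk
  obtain ⟨hca, hcb⟩ := abs_lt.1 hb3
  have htri : k + z' - z = 2 ∨ k + z' - z = -2
      ∨ (-1 ≤ k + z' - z ∧ k + z' - z ≤ 1) := by omega
  rcases htri with h2 | h2 | h2
  · exfalso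
    rw [h2] at hS heq
    push_cast at hS heq
    -- u' = t + u - 2ϑ < 0, so v' < 0 hence qmod v' ≤ 0
    have hu'neg : v' - qmod ϑ v' < 0 := by linarith
    have hv' : v' < 0 := by
      by_contra h; push_neg at h
      linarith [sub_qmod_nonneg ϑ v' hϑ h]
    have hq' : qmod ϑ v' ≤ 0 := qmod_nonpos ϑ v' hϑ hv'.le
    have hupos : 0 < v - qmod ϑ v := by linarith
    have hv : 0 < v := by
      by_contra h; push_neg at h
      linarith [sub_qmod_nonpos ϑ v hϑ h]
    have hq : 0 ≤ qmod ϑ v := qmod_nonneg ϑ v hϑ hv.le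
    nlinarith
  · exfalso
    rw [h2] at hS heq
    push_cast at hS heq
    have hu'pos : 0 < v' - qmod ϑ v' := by linarith
    have hv' : 0 < v' := by
      by_contra h; push_neg at h
      linarith [sub_qmod_nonpos ϑ v' hϑ h]
    have hq' : 0 ≤ qmod ϑ v' := qmod_nonneg ϑ v' hϑ hv'.le
    have huneg : v - qmod ϑ v < 0 := by linarith
    have hv : v < 0 := by
      by_contra h; push_neg at h
      linarith [sub_qmod_nonneg ϑ v hϑ h]
    have hq : qmod ϑ v ≤ 0 := qmod_nonpos ϑ v hϑ hv.le
    nlinarith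
  · exact abs_le.2 h2

lemma key (ϑ : ℝ) (hϑ : 0 < ϑ) (a ν : ℕ → ℝ) (n : ℕ)
    (ht : ∀ m, m ≤ n → |∑ i ∈ Finset.range (m + 1), ν i| ≤ ϑ) :
    ∃ k : ℤ, |k| ≤ 1 ∧
      ∑ i ∈ Finset.range (n + 1),
        (IFb ϑ (fun j => a j + ν j) i - IFb ϑ a i) = (k : ℝ) * ϑ := by
  set a' : ℕ → ℝ := fun j => a j + ν j with ha'
  have hid : ∀ m : ℕ,
      ∑ i ∈ Finset.range (m + 1), (IFb ϑ a' i - IFb ϑ a i)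
        = (∑ i ∈ Finset.range (m + 1), ν i)
          + (IFv ϑ a m - qmod ϑ (IFv ϑ a m))
          - (IFv ϑ a' m - qmod ϑ (IFv ϑ a' m)) := by
    intro m
    rw [Finset.sum_sub_distrib, sum_IFb, sum_IFb]
    have hsum : ∑ i ∈ Finset.range (m + 1), a' i
        = ∑ i ∈ Finset.range (m + 1), a i + ∑ i ∈ Finset.range (m + 1), ν i := by
      rw [ha', Finset.sum_add_distrib]
    rw [hsum]; ring
  induction n with
  | zero =>
      have h0 : ∑ i ∈ Finset.range 1, (IFb ϑ a' i - IFb ϑ a i)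
          = qmod ϑ (IFv ϑ a' 0) - qmod ϑ (IFv ϑ a 0) := by
        simp [Finset.sum_range_one, IFb]
      obtain ⟨k', hk', hkeq⟩ := step ϑ hϑ (IFv ϑ a 0) (IFv ϑ a' 0)
        (∑ i ∈ Finset.range 1, ν i) 0 (by simp) (ht 0 le_rfl)
        (by rw [Int.cast_zero, zero_mul, zero_add, ← h0]; exact hid 0)
      exact ⟨k', hk', by rw [h0]; rw [Int.cast_zero, zero_mul, zero_add] at hkeq; exact hkeq⟩
  | succ n ih =>
      obtain ⟨k, hk, hS⟩ := ih (fun m hm => ht m (le_trans hm (Nat.le_succ n)))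
      have hsplit : ∑ i ∈ Finset.range (n + 1 + 1), (IFb ϑ a' i - IFb ϑ a i)
          = ∑ i ∈ Finset.range (n + 1), (IFb ϑ a' i - IFb ϑ a i)
            + (qmod ϑ (IFv ϑ a' (n + 1)) - qmod ϑ (IFv ϑ a (n + 1))) := by
        rw [Finset.sum_range_succ]; rfl
      obtain ⟨k', hk', hkeq⟩ := step ϑ hϑ (IFv ϑ a (n + 1)) (IFv ϑ a' (n + 1))
        (∑ i ∈ Finset.range (n + 1 + 1), ν i) k hk (ht (n + 1) le_rfl)
        (by rw [← hS, ← hsplit]; exact hid (n + 1))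
      exact ⟨k', hk', by rw [hsplit, hS]; exact hkeq⟩

/-- additive error bound for integrate-and-fire: a perturbation
`ν` with `‖ν‖_A ≤ ϑ` changes the output by at most `ϑ` in Alexiewicz norm. -/
theorem IF_additive_error (ϑ : ℝ) (hϑ : 0 < ϑ) (N : ℕ) (a ν : ℕ → ℝ)
    (hν : Anorm N ν ≤ ϑ) :
    Anorm N (fun n => IFb ϑ (fun i => a i + ν i) n - IFb ϑ a n) ≤ ϑ := by
  rw [Anorm]
  refine Real.iSup_le (f := fun n : Fin N => |∑ i ∈ Finset.range (n.val + 1),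
    (IFb ϑ (fun j => a j + ν j) i - IFb ϑ a i)|) (fun n => ?_) hϑ.le
  have ht : ∀ m, m ≤ n.val → |∑ i ∈ Finset.range (m + 1), ν i| ≤ ϑ := by
    intro m hm
    have hb := le_ciSup (f := fun m : Fin N => |∑ i ∈ Finset.range (m.val + 1), ν i|)
      (Set.Finite.bddAbove (Set.finite_range _)) (⟨m, lt_of_le_of_lt hm n.isLt⟩ : Fin N)
    exact le_trans hb hν
  obtain ⟨k, hk, hS⟩ := key ϑ hϑ a ν n.val ht
  show |∑ i ∈ Finset.range (n.val + 1),
    (IFb ϑ (fun j => a j + ν j) i - IFb ϑ a i)| ≤ ϑ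
  rw [hS, abs_mul, abs_of_pos hϑ]
  have hkR : |(k : ℝ)| ≤ 1 := by
    rw [← Int.cast_abs]; exact_mod_cast hk
  nlinarith
end

section
/- For any sequence a with times t_1 < ... < t_N and α ≥ 0, one has max_i |a_i| ≤ 2‖a‖_{D,α} and ‖a‖_{A,α} ≤ ‖a‖_{D,α} ≤ 2‖a‖_{A,α}, where ‖a‖_{D,α} := max_{1≤m≤n≤N} |∑_{j=m}^n a_j e^{-α(t_n - t_j)}|. -/
/-- The leaky Alexiewicz norm with leakage `α` and spike times `t`. -/
noncomputable def lanorm {N : ℕ} (α : ℝ) (t : Fin N → ℝ) (a : Fin N → ℝ) : ℝ :=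
  ⨆ n : Fin N, |∑ j ∈ Finset.Iic n, a j * Real.exp (-α * (t n - t j))|

/-- The leaky diameter (discrepancy) norm with leakage `α` and spike times `t`. -/
noncomputable def ldnorm {N : ℕ} (α : ℝ) (t : Fin N → ℝ) (a : Fin N → ℝ) : ℝ :=
  ⨆ p : Fin N × Fin N, |∑ j ∈ Finset.Icc p.1 p.2, a j * Real.exp (-α * (t p.2 - t j))|

/-- each amplitude satisfies `|a_i| ≤ ‖a‖_{D,α} ≤ 2‖a‖_{D,α}`, and
the leaky Alexiewicz and diameter norms are equivalent:
`‖a‖_{A,α} ≤ ‖a‖_{D,α} ≤ 2‖a‖_{A,α}`. -/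
theorem lanorm_ldnorm_equiv (N : ℕ) (α : ℝ) (hα : 0 ≤ α)
    (t : Fin N → ℝ) (ht : StrictMono t) (a : Fin N → ℝ) :
    (∀ i : Fin N, |a i| ≤ 2 * ldnorm α t a) ∧
    lanorm α t a ≤ ldnorm α t a ∧ ldnorm α t a ≤ 2 * lanorm α t a := by
  rcases Nat.eq_zero_or_pos N with hN | hN
  · subst hN
    refine ⟨fun i => absurd i.2 (by omega), ?_, ?_⟩ <;>
      simp [lanorm, ldnorm, Real.iSup_of_isEmpty]
  haveI : NeZero N := ⟨by omega⟩
  have hbddA : BddAbove (Set.range fun n : Fin N =>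
      |∑ j ∈ Finset.Iic n, a j * Real.exp (-α * (t n - t j))|) :=
    (Set.finite_range _).bddAbove
  have hbddD : BddAbove (Set.range fun p : Fin N × Fin N =>
      |∑ j ∈ Finset.Icc p.1 p.2, a j * Real.exp (-α * (t p.2 - t j))|) :=
    (Set.finite_range _).bddAbove
  have hleA : ∀ n : Fin N,
      |∑ j ∈ Finset.Iic n, a j * Real.exp (-α * (t n - t j))| ≤ lanorm α t a :=
    fun n => le_ciSup hbddA n
  have hleD : ∀ p : Fin N × Fin N,
      |∑ j ∈ Finset.Icc p.1 p.2, a j * Real.exp (-α * (t p.2 - t j))| ≤ ldnorm α t a :=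
    fun p => le_ciSup hbddD p
  have hA0 : 0 ≤ lanorm α t a := le_trans (abs_nonneg _) (hleA 0)
  have hD0 : 0 ≤ ldnorm α t a := le_trans (abs_nonneg _) (hleD (0, 0))
  have hIcc0 : ∀ n : Fin N, Finset.Icc (0 : Fin N) n = Finset.Iic n := by
    intro n
    ext j
    simp [Fin.zero_le j]
  have hAD : lanorm α t a ≤ ldnorm α t a := by
    refine ciSup_le fun n => ?_
    have := hleD (0, n)
    rw [hIcc0 n] at this
    exact this
  refine ⟨fun i => ?_, hAD, ?_⟩
  · have := hleD (i, i)
    simp only [Finset.Icc_self, Finset.sum_singleton, sub_self, mul_zero, Real.exp_zero,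
      mul_one] at this
    linarith
  · refine ciSup_le fun p => ?_
    obtain ⟨m, n⟩ := p
    by_cases hmn : m ≤ n
    · by_cases hm : m = 0
      · subst hm
        rw [hIcc0 n]
        linarith [hleA n]
      · have hmv : m.val ≠ 0 := fun h => hm (Fin.ext h)
        have hN2 : 1 < N := lt_of_le_of_lt (Nat.one_le_iff_ne_zero.mpr hmv) m.2
        have h1v : (1 : Fin N).val = 1 := by rw [Fin.val_one', Nat.mod_eq_of_lt hN2]
        have hle1 : (1 : Fin N) ≤ m := by rw [Fin.le_def, h1v]; omega
        have hval : ((m - 1 : Fin N)).val = m.val - 1 := by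
          rw [Fin.coe_sub_iff_le.mpr hle1, h1v]
        have hIio : Finset.Iic (m - 1) = Finset.Iio m := by
          ext j
          simp only [Finset.mem_Iic, Finset.mem_Iio, Fin.le_def, Fin.lt_def, hval]
          omega
        have hm'lt : m - 1 < m := by
          rw [Fin.lt_def, hval]; omega
        have hsplit : ∑ j ∈ Finset.Iic n, a j * Real.exp (-α * (t n - t j)) =
            (∑ j ∈ Finset.Iio m, a j * Real.exp (-α * (t n - t j))) +
            ∑ j ∈ Finset.Icc m n, a j * Real.exp (-α * (t n - t j)) := by
          rw [← Finset.sum_union]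
          · congr 1
            ext j
            have hmn' := Fin.le_def.mp hmn
            simp only [Finset.mem_union, Finset.mem_Iio, Finset.mem_Icc, Finset.mem_Iic,
              Fin.le_def, Fin.lt_def]
            omega
          · exact Finset.disjoint_left.mpr fun j hj hj' => absurd (Finset.mem_Icc.mp hj').1
              (not_le.mpr (Finset.mem_Iio.mp hj))
        have hfact : ∑ j ∈ Finset.Iio m, a j * Real.exp (-α * (t n - t j)) =
            Real.exp (-α * (t n - t (m - 1))) *
            ∑ j ∈ Finset.Iic (m - 1), a j * Real.exp (-α * (t (m - 1) - t j)) := by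
          rw [← hIio, Finset.mul_sum]
          refine Finset.sum_congr rfl fun j hj => ?_
          have hsum : -α * (t n - t j) =
              (-α * (t n - t (m - 1))) + (-α * (t (m - 1) - t j)) := by ring
          rw [hsum, Real.exp_add]
          ring
        have hexple : Real.exp (-α * (t n - t (m - 1))) ≤ 1 := by
          rw [show (1:ℝ) = Real.exp 0 from (Real.exp_zero).symm]
          apply Real.exp_le_exp.mpr
          have : t (m - 1) ≤ t n := (ht.le_iff_le).mpr (le_of_lt (lt_of_lt_of_le hm'lt hmn))
          nlinarith
        have h1 : |∑ j ∈ Finset.Iio m, a j * Real.exp (-α * (t n - t j))| ≤ lanorm α t a := by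
          rw [hfact, abs_mul, abs_of_nonneg (Real.exp_pos _).le]
          calc Real.exp (-α * (t n - t (m - 1))) *
              |∑ j ∈ Finset.Iic (m - 1), a j * Real.exp (-α * (t (m - 1) - t j))|
              ≤ 1 * lanorm α t a :=
                mul_le_mul hexple (hleA (m - 1)) (abs_nonneg _) zero_le_one
            _ = lanorm α t a := one_mul _
        have h2 : |∑ j ∈ Finset.Icc m n, a j * Real.exp (-α * (t n - t j))| ≤
            |∑ j ∈ Finset.Iic n, a j * Real.exp (-α * (t n - t j))| +
            |∑ j ∈ Finset.Iio m, a j * Real.exp (-α * (t n - t j))| := by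
          have heq : ∑ j ∈ Finset.Icc m n, a j * Real.exp (-α * (t n - t j)) =
              (∑ j ∈ Finset.Iic n, a j * Real.exp (-α * (t n - t j))) -
              ∑ j ∈ Finset.Iio m, a j * Real.exp (-α * (t n - t j)) := by
            linarith [hsplit]
          rw [heq]
          exact abs_sub _ _
        linarith [hleA n]
    · rw [Finset.Icc_eq_empty (by simpa using hmn), Finset.sum_empty, abs_zero]
      linarith
end

section
/- For time-shift perturbation with zero leakage: shifting a spike train in time does not change its Alexiewicz norm when α = 0, i.e., ‖a‖_{A,0} is independent of the spike times; consequently for α = 0, ‖η(·-Δt) - η‖_{A,0} ≤ max_i |a_i| + ‖a‖_{A,0}·0, in fact the difference of partial sums of the interleaved shifted and unshifted train is bounded by max_i |a_i| for sufficiently small Δt. -/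
/-- The difference train `η(·-Δt) - η` in temporal order: for `Δt` smaller than
the minimal inter-spike gap, the `2N` events occur in the order
`t_1 < t_1+Δt < t_2 < t_2+Δt < ...`, with amplitude `-a_i` at `t_i` (from `-η`)
and `+a_i` at `t_i + Δt` (from the shifted train). -/
def diffTrain {N : ℕ} (a : Fin N → ℝ) : Fin (2 * N) → ℝ := fun k =>
  if k.val % 2 = 0 then -a ⟨k.val / 2, by have := k.isLt; omega⟩
  else a ⟨k.val / 2, by have := k.isLt; omega⟩

private def gAux {N : ℕ} (a : Fin N → ℝ) : ℕ → ℝ := fun k =>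
  if h : k / 2 < N then (if k % 2 = 0 then -a ⟨k / 2, h⟩ else a ⟨k / 2, h⟩) else 0

private lemma gAux_sum {N : ℕ} (a : Fin N → ℝ) (m : ℕ) :
    ∑ k ∈ Finset.range m, gAux a k =
      if m % 2 = 1 then (if h : m / 2 < N then -a ⟨m / 2, h⟩ else 0) else 0 := by
  induction m with
  | zero => simp
  | succ m ih =>
    rw [Finset.sum_range_succ, ih]
    rcases Nat.even_or_odd m with he | ho
    · have h2 : m % 2 = 0 := Nat.even_iff.mp he
      have h3 : (m + 1) % 2 = 1 := by omega
      have h4 : (m + 1) / 2 = m / 2 := by omega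
      simp only [h2, h3, gAux, if_neg (by omega : ¬ m % 2 = 1), h4]
      by_cases h : m / 2 < N <;> simp [h]
    · have h2 : m % 2 = 1 := Nat.odd_iff.mp ho
      have h3 : (m + 1) % 2 = 0 := by omega
      simp only [h2, h3, gAux, if_neg (by omega : ¬ (m + 1) % 2 = 1), if_pos rfl]
      by_cases h : m / 2 < N <;> simp [h]

private lemma nat_Iic_eq_range (n : ℕ) : Finset.Iic n = Finset.range (n + 1) := by
  ext k; simp [Nat.lt_succ_iff]

/-- for zero leakage, every partial sum (in temporal order) of the
difference train `η(·-Δt) - η` has absolute value at most `max_i |a_i|`; hence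
`‖η(·-Δt) - η‖_{A,0} ≤ max_i |a_i|`. -/
theorem timeShift_alexiewicz_bound (N : ℕ) (a : Fin N → ℝ) :
    (∀ n : Fin (2 * N), |∑ i ∈ Finset.Iic n, diffTrain a i| ≤ ⨆ i : Fin N, |a i|) ∧
    (⨆ n : Fin (2 * N), |∑ i ∈ Finset.Iic n, diffTrain a i|) ≤ ⨆ i : Fin N, |a i| := by
  have hsup : ∀ i : Fin N, |a i| ≤ ⨆ i : Fin N, |a i| := fun i =>
    le_ciSup (Set.Finite.bddAbove (Set.finite_range fun i => |a i|)) i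
  have hsup0 : (0 : ℝ) ≤ ⨆ i : Fin N, |a i| := by
    rcases Nat.eq_zero_or_pos N with h | h
    · subst h
      simp [Real.iSup_of_isEmpty]
    · exact le_trans (abs_nonneg _) (hsup ⟨0, h⟩)
  have key : ∀ n : Fin (2 * N), |∑ i ∈ Finset.Iic n, diffTrain a i| ≤ ⨆ i : Fin N, |a i| := by
    intro n
    have hmap : ∑ i ∈ Finset.Iic n, diffTrain a i = ∑ k ∈ Finset.Iic n.val, gAux a k := by
      rw [← Fin.map_valEmbedding_Iic, Finset.sum_map]
      apply Finset.sum_congr rfl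
      intro i _
      have hlt : i.val / 2 < N := by have := i.isLt; omega
      simp [diffTrain, gAux, Fin.valEmbedding, hlt]
      rfl
    rw [hmap, nat_Iic_eq_range, gAux_sum]
    by_cases h1 : (n.val + 1) % 2 = 1
    · simp only [if_pos h1]
      by_cases h2 : (n.val + 1) / 2 < N
      · rw [dif_pos h2, abs_neg]
        exact hsup ⟨(n.val + 1) / 2, h2⟩
      · rw [dif_neg h2, abs_zero]
        exact hsup0
    · simpa [h1] using hsup0
  refine ⟨key, ?_⟩
  rcases Nat.eq_zero_or_pos N with h | h
  · subst h
    simp [Real.iSup_of_isEmpty, hsup0]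
  · have : Nonempty (Fin (2 * N)) := ⟨⟨0, by omega⟩⟩
    exact ciSup_le key
end
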